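/- arXiv:1510.07079 — 5 statements merged into one kernel-verified Lean document; each statement's English description precedes it below -/
import Mathlib

section
/- Let m be an odd integer with m ≥ 3 and n a positive integer not divisible by m. Then there is no 2-factorization of C_m[n] into n−1 C_m-factors and one C_n-factor. -/
open SimpleGraph

/-- `H` is a `C_k`-factor of `G`: a spanning 2-regular subgraph of `G` all of whose
connected components are cycles of length `k` (i.e. have exactly `k` vertices). -/
def IsCycleFactor {V : Type*} (G H : SimpleGraph V) (k : ℕ) : Prop :=
  H ≤ G ∧ (∀ v, Nat.card (H.neighborSet v) = 2) ∧
    ∀ v, Nat.card {w | H.Reachable v w} = k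

/-- A 2-factorization of `G` into `α` `C_m`-factors and `β` `C_n`-factors:
a family of factors such that every edge of `G` lies in exactly one factor. -/
def IsHWFactorization {V : Type*} (G : SimpleGraph V) (m n α β : ℕ) : Prop :=
  ∃ F : Fin α ⊕ Fin β → SimpleGraph V,
    (∀ i : Fin α, IsCycleFactor G (F (Sum.inl i)) m) ∧
    (∀ j : Fin β, IsCycleFactor G (F (Sum.inr j)) n) ∧
    ∀ e : Sym2 V, e ∈ G.edgeSet ↔ ∃! p, e ∈ (F p).edgeSet

/-- The lexicographic product `C_m[n]`. -/
def lexCycle (m n : ℕ) : SimpleGraph (ZMod m × ZMod n) :=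
  SimpleGraph.fromRel (fun a b => a.1 = b.1 + 1 ∨ b.1 = a.1 + 1)

namespace HWaux
open Finset
open scoped Classical

variable {m n : ℕ} [NeZero m] [NeZero n]

noncomputable def dup (K : SimpleGraph (ZMod m × ZMod n)) (v : ZMod m × ZMod n) : ℕ :=
  (univ.filter fun u : ZMod m × ZMod n => K.Adj v u ∧ u.1 = v.1 + 1).card

noncomputable def ddn (K : SimpleGraph (ZMod m × ZMod n)) (v : ZMod m × ZMod n) : ℕ :=
  (univ.filter fun u : ZMod m × ZMod n => K.Adj v u ∧ u.1 + 1 = v.1).card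

lemma adj_cases {K : SimpleGraph (ZMod m × ZMod n)} (hK : K ≤ lexCycle m n)
    {v u : ZMod m × ZMod n} (h : K.Adj v u) : v.1 = u.1 + 1 ∨ u.1 = v.1 + 1 := by
  have h2 := hK h
  rw [lexCycle, SimpleGraph.fromRel_adj] at h2
  tauto

lemma two_ne_zero' (hm3 : 3 ≤ m) : (2 : ZMod m) ≠ 0 := by
  intro h
  have : ((2 : ℕ) : ZMod m) = 0 := by push_cast; exact h
  have h2 := (ZMod.natCast_eq_zero_iff 2 m).mp this
  have := Nat.le_of_dvd (by norm_num) h2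
  omega

lemma dup_add_ddn (hm3 : 3 ≤ m) {K : SimpleGraph (ZMod m × ZMod n)}
    (hK : K ≤ lexCycle m n) {v : ZMod m × ZMod n}
    (h2 : Nat.card (K.neighborSet v) = 2) : dup K v + ddn K v = 2 := by
  have hset : K.neighborSet v = ↑(univ.filter fun u : ZMod m × ZMod n => K.Adj v u) := by
    ext u; simp [SimpleGraph.neighborSet]
  rw [hset, Nat.card_coe_set_eq, Set.ncard_coe_finset] at h2
  have hsplit : (univ.filter fun u : ZMod m × ZMod n => K.Adj v u)
      = (univ.filter fun u : ZMod m × ZMod n => K.Adj v u ∧ u.1 = v.1 + 1)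
        ∪ (univ.filter fun u : ZMod m × ZMod n => K.Adj v u ∧ u.1 + 1 = v.1) := by
    rw [← Finset.filter_or]
    apply Finset.filter_congr
    intro u _
    constructor
    · intro h
      rcases adj_cases hK h with h' | h'
      · exact Or.inr ⟨h, h'.symm⟩
      · exact Or.inl ⟨h, h'⟩
    · tauto
  have hdisj : Disjoint
      (univ.filter fun u : ZMod m × ZMod n => K.Adj v u ∧ u.1 = v.1 + 1)
      (univ.filter fun u : ZMod m × ZMod n => K.Adj v u ∧ u.1 + 1 = v.1) := by
    rw [Finset.disjoint_left]
    intro u hu1 hu2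
    simp only [mem_filter] at hu1 hu2
    have h1 : u.1 = v.1 + 1 := hu1.2.2
    have hb : v.1 + 2 = v.1 := by
      rw [show v.1 + 2 = v.1 + 1 + 1 by ring, ← h1, hu2.2.2]
    have : (2 : ZMod m) = 0 := by
      have := add_right_cancel (a := (2 : ZMod m)) (b := v.1) (c := 0)
      rw [add_comm] at hb
      simpa using congrArg (fun z => z - v.1) hb
    exact two_ne_zero' hm3 this
  rw [hsplit, Finset.card_union_of_disjoint hdisj] at h2
  exact h2

lemma zmod_const {f : ZMod m → ℕ} (h : ∀ x, f (x + 1) = f x) (x y : ZMod m) : f x = f y := by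
  have key : ∀ (j : ℕ) (z : ZMod m), f (z + j) = f z := by
    intro j
    induction j with
    | zero => intro z; simp
    | succ j ih =>
        intro z
        have hc : (((j : ℕ) + 1 : ℕ) : ZMod m) = (j : ZMod m) + 1 := by push_cast; ring
        rw [hc, ← add_assoc, h, ih]
  obtain ⟨j, hj⟩ := (ZMod.natCast_rightInverse (n := m)).surjective (y - x)
  have : x + (j : ZMod m) = y := by rw [hj]; ring
  rw [← this, key]

lemma key_lemma (hm3 : 3 ≤ m) (K : SimpleGraph (ZMod m × ZMod n))
    (hK : K ≤ lexCycle m n) (hreg : ∀ v, Nat.card (K.neighborSet v) = 2)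
    (v₀ : ZMod m × ZMod n) :
    ∃ c e : ZMod m → ℕ,
      (∀ x, e (x - 1) + e x = 2 * c x) ∧
      (∑ x, c x = Nat.card {w | K.Reachable v₀ w}) ∧
      (∑ x, e x = Nat.card {w | K.Reachable v₀ w}) ∧
      (∀ w, K.Reachable v₀ w → c w.1 = 1 → dup K w = e w.1 ∧ ddn K w = e (w.1 - 1)) ∧
      ((∀ w, K.Reachable v₀ w → dup K w = 1) → ∀ x, e x = c x) := by
  set S : Finset (ZMod m × ZMod n) := univ.filter fun w => K.Reachable v₀ w with hS
  set Sx : ZMod m → Finset (ZMod m × ZMod n) := fun x => S.filter fun w => w.1 = x with hSx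
  have hclosed : ∀ w ∈ S, ∀ u, K.Adj w u → u ∈ S := by
    intro w hw u hadj
    simp only [hS, mem_filter, mem_univ, true_and] at hw ⊢
    exact hw.trans hadj.reachable
  have hcardS : Nat.card {w | K.Reachable v₀ w} = S.card := by
    have : {w | K.Reachable v₀ w} = ↑S := by ext w; simp [hS]
    rw [this, Nat.card_coe_set_eq, Set.ncard_coe_finset]
  -- double counting
  have hdc : ∀ x : ZMod m, ∑ w ∈ Sx x, dup K w = ∑ u ∈ Sx (x + 1), ddn K u := by
    intro x
    have hL : ∀ w ∈ Sx x, dup K w = ∑ u ∈ Sx (x + 1), (if K.Adj w u then 1 else 0) := by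
      intro w hw
      simp only [hSx, mem_filter] at hw
      have heq : (univ.filter fun u : ZMod m × ZMod n => K.Adj w u ∧ u.1 = w.1 + 1)
          = (Sx (x + 1)).filter (fun u => K.Adj w u) := by
        ext u
        simp only [hSx, mem_filter, mem_univ, true_and]
        constructor
        · rintro ⟨ha, hu⟩
          exact ⟨⟨hclosed w hw.1 u ha, by rw [hu, hw.2]⟩, ha⟩
        · rintro ⟨⟨_, hu⟩, ha⟩
          exact ⟨ha, by rw [hu, hw.2]⟩
      rw [dup, heq, Finset.card_filter]
    rw [Finset.sum_congr rfl hL, Finset.sum_comm]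
    apply Finset.sum_congr rfl
    intro u hu
    simp only [hSx, mem_filter] at hu
    have heq : (univ.filter fun w : ZMod m × ZMod n => K.Adj u w ∧ w.1 + 1 = u.1)
        = (Sx x).filter (fun w => K.Adj u w) := by
      ext w
      simp only [hSx, mem_filter, mem_univ, true_and]
      constructor
      · rintro ⟨ha, hw⟩
        refine ⟨⟨hclosed u hu.1 w ha, ?_⟩, ha⟩
        have : w.1 + 1 = x + 1 := by rw [hw, hu.2]
        exact add_right_cancel this
      · rintro ⟨⟨_, hw⟩, ha⟩
        exact ⟨ha, by rw [hw, hu.2]⟩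
    rw [ddn, heq, Finset.card_filter]
    apply Finset.sum_congr rfl
    intro w _
    simp [K.adj_comm]
  have hsum2 : ∀ x : ZMod m, ∑ w ∈ Sx x, (dup K w + ddn K w) = 2 * (Sx x).card := by
    intro x
    rw [Finset.sum_congr rfl (fun w _ => dup_add_ddn hm3 hK (hreg w)), Finset.sum_const,
      smul_eq_mul, mul_comm]
  refine ⟨fun x => (Sx x).card, fun x => ∑ w ∈ Sx x, dup K w, ?_, ?_, ?_, ?_, ?_⟩
  · intro x
    dsimp only
    have h1 := hdc (x - 1)
    rw [sub_add_cancel] at h1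
    rw [h1, ← Finset.sum_add_distrib]
    have := hsum2 x
    rw [← this]
    apply Finset.sum_congr rfl
    intro w _
    ring
  · rw [hcardS]
    have := Finset.card_eq_sum_card_fiberwise
      (f := fun w : ZMod m × ZMod n => w.1) (s := S) (t := univ) (fun x _ => mem_univ _)
    rw [this]
  · rw [hcardS]
    dsimp only
    have hfib : ∑ x : ZMod m, ∑ w ∈ Sx x, dup K w = ∑ w ∈ S, dup K w :=
      Finset.sum_fiberwise S (fun w => w.1) (dup K)
    have hfib' : ∑ x : ZMod m, ∑ w ∈ Sx x, ddn K w = ∑ w ∈ S, ddn K w :=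
      Finset.sum_fiberwise S (fun w => w.1) (ddn K)
    have hdd : ∑ x : ZMod m, ∑ w ∈ Sx x, dup K w = ∑ x : ZMod m, ∑ w ∈ Sx x, ddn K w := by
      rw [Finset.sum_congr rfl (fun x _ => hdc x)]
      exact Fintype.sum_equiv (Equiv.addRight (1 : ZMod m)) _ _ (fun x => rfl)
    have htot : ∑ w ∈ S, (dup K w + ddn K w) = 2 * S.card := by
      rw [Finset.sum_congr rfl (fun w _ => dup_add_ddn hm3 hK (hreg w)), Finset.sum_const,
        smul_eq_mul, mul_comm]
    rw [Finset.sum_add_distrib] at htot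
    rw [hfib, hfib'] at hdd
    omega
  · intro w hw hc1
    dsimp only at hc1 ⊢
    have hwS : w ∈ Sx w.1 := by simp [hSx, hS, hw]
    obtain ⟨a, ha⟩ := Finset.card_eq_one.mp hc1
    have hwa : w = a := by rw [ha] at hwS; exact Finset.mem_singleton.mp hwS
    constructor
    · rw [ha, hwa, Finset.sum_singleton]
    · have h1 := hdc (w.1 - 1)
      rw [sub_add_cancel] at h1
      rw [h1, ha, hwa, Finset.sum_singleton]
  · intro hd x
    dsimp only
    have hone : ∀ w ∈ Sx x, dup K w = 1 := by
      intro w hw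
      simp only [hSx, hS, mem_filter, mem_univ, true_and] at hw
      exact hd w hw.1
    rw [Finset.sum_congr rfl hone, Finset.sum_const, smul_eq_mul, mul_one]


lemma factorA (hm3 : 3 ≤ m) (hmo : Odd m) {K : SimpleGraph (ZMod m × ZMod n)}
    (hK : K ≤ lexCycle m n) (hreg : ∀ v, Nat.card (K.neighborSet v) = 2)
    (v : ZMod m × ZMod n) (hcomp : Nat.card {w | K.Reachable v w} = m) :
    dup K v = 1 ∧ ddn K v = 1 := by
  obtain ⟨c, e, h1, h2, h3, h4, _⟩ := key_lemma hm3 K hK hreg v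
  rw [hcomp] at h2 h3
  have hstep : ∀ x : ZMod m, (fun y => e y % 2) (x + 1) = (fun y => e y % 2) x := by
    intro x
    have := h1 (x + 1)
    rw [add_sub_cancel_right] at this
    dsimp only
    omega
  have hall : ∀ x : ZMod m, e x % 2 = e 0 % 2 := fun x => zmod_const (f := fun y => e y % 2) hstep x 0
  by_cases h0 : e 0 % 2 = 0
  · exfalso
    have heven : ∀ x ∈ (univ : Finset (ZMod m)), e x % 2 = 0 := fun x _ => (hall x).trans h0
    have : (∑ x : ZMod m, e x) % 2 = 0 := by
      rw [Finset.sum_nat_mod, Finset.sum_congr rfl heven]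
      simp
    rw [h3] at this
    obtain ⟨t, ht⟩ := hmo
    omega
  · have hge : ∀ x : ZMod m, 1 ≤ e x := by
      intro x
      have := hall x
      omega
    have hcge : ∀ x : ZMod m, 1 ≤ c x := by
      intro x
      have := h1 x
      have := hge (x - 1)
      have := hge x
      omega
    have hc1 : ∀ x : ZMod m, c x = 1 := by
      by_contra hcon
      push_neg at hcon
      obtain ⟨x₀, hx₀⟩ := hcon
      have h2' : 2 ≤ c x₀ := by have := hcge x₀; omega
      have hrest : (univ.erase x₀).card * 1 ≤ ∑ x ∈ univ.erase x₀, c x :=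
        Finset.card_nsmul_le_sum _ _ _ (fun i _ => hcge i)
      have hsplit : c x₀ + ∑ x ∈ univ.erase x₀, c x = ∑ x : ZMod m, c x :=
        Finset.add_sum_erase univ c (mem_univ x₀)
      have hcard : (univ.erase x₀).card = m - 1 := by
        rw [Finset.card_erase_of_mem (mem_univ x₀), card_univ, ZMod.card]
      omega
    have he1 : ∀ x : ZMod m, e x = 1 := by
      intro x
      have := h1 x
      rw [hc1 x] at this
      have := hge (x - 1)
      have := hge x
      omega
    obtain ⟨ha, hb⟩ := h4 v (Reachable.refl v) (hc1 v.1)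
    exact ⟨ha.trans (he1 _), hb.trans (he1 _)⟩

lemma factorC (hm3 : 3 ≤ m) {H : SimpleGraph (ZMod m × ZMod n)}
    (hH : H ≤ lexCycle m n) (hreg : ∀ v, Nat.card (H.neighborSet v) = 2)
    (hdup : ∀ v, dup H v = 1) (v₀ : ZMod m × ZMod n)
    (hcomp : Nat.card {w | H.Reachable v₀ w} = n) : m ∣ n := by
  obtain ⟨c, e, h1, h2, h3, _, h5⟩ := key_lemma hm3 H hH hreg v₀
  have he : ∀ x, e x = c x := h5 (fun w _ => hdup w)
  have hstep : ∀ x : ZMod m, c (x + 1) = c x := by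
    intro x
    have := h1 (x + 1)
    rw [add_sub_cancel_right, he, he] at this
    omega
  have hconst : ∀ x, c x = c 0 := fun x => zmod_const (f := c) hstep x 0
  have hsum : ∑ x : ZMod m, c x = m * c 0 := by
    rw [Finset.sum_congr rfl (fun x _ => hconst x), Finset.sum_const, smul_eq_mul,
      card_univ, ZMod.card]
  rw [hcomp] at h2
  exact ⟨c 0, by omega⟩

end HWaux



open Finset in
theorem stmt_3 (m n : ℕ) (hm : 3 ≤ m) (hmo : Odd m) (hn : 1 ≤ n)
    (hdvd : ¬ m ∣ n) :
    ¬ IsHWFactorization (lexCycle m n) m n (n - 1) 1 := by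
  haveI : NeZero m := ⟨by omega⟩
  haveI : NeZero n := ⟨by omega⟩
  rintro ⟨F, hCm, hCn, hpart⟩
  classical
  obtain ⟨hHle, hHreg, hHcomp⟩ := hCn 0
  have hdupH : ∀ v : ZMod m × ZMod n, HWaux.dup (F (Sum.inr 0)) v = 1 := by
    intro v
    have hPart : ∀ u, (lexCycle m n).Adj v u → ∃! p, (F p).Adj v u := by
      intro u hadj
      have h := (hpart s(v, u)).mp (by rwa [SimpleGraph.mem_edgeSet])
      simpa [SimpleGraph.mem_edgeSet] using h
    set UpG : Finset (ZMod m × ZMod n) :=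
      univ.filter (fun u => u.1 = v.1 + 1) with hUpG
    have hGadj : ∀ u ∈ UpG, (lexCycle m n).Adj v u := by
      intro u hu
      rw [hUpG, mem_filter] at hu
      have hu1 := hu.2
      rw [lexCycle, SimpleGraph.fromRel_adj]
      refine ⟨?_, Or.inl (Or.inr hu1)⟩
      intro hvu
      rw [← hvu] at hu1
      have h1 : (1 : ZMod m) = 0 := (left_eq_add.mp hu1)
      have h1' : ((1 : ℕ) : ZMod m) = 0 := by push_cast; exact h1
      have := (ZMod.natCast_eq_zero_iff 1 m).mp h1'
      have := Nat.le_of_dvd (by norm_num) this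
      omega
    have hUcard : UpG.card = n := by
      have hprod : UpG = {v.1 + 1} ×ˢ (univ : Finset (ZMod n)) := by
        ext u
        rw [hUpG, mem_filter, Finset.mem_product, Finset.mem_singleton]
        simp
      rw [hprod, Finset.card_product, Finset.card_singleton, card_univ, ZMod.card, one_mul]
    set f : ZMod m × ZMod n → (Fin (n - 1) ⊕ Fin 1) := fun u =>
      if h : ∃! p, (F p).Adj v u then h.choose else Sum.inr 0 with hf
    have hfibcard : UpG.card
        = ∑ p : Fin (n - 1) ⊕ Fin 1, (UpG.filter fun u => (F p).Adj v u).card := by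
      rw [Finset.card_eq_sum_card_fiberwise (f := f) (t := univ) (fun u _ => mem_univ _)]
      apply Finset.sum_congr rfl
      intro p _
      congr 1
      ext u
      simp only [mem_filter, and_congr_right_iff]
      intro hu
      have h := hPart u (hGadj u hu)
      have hfu : f u = h.choose := dif_pos h
      constructor
      · intro hfp
        rw [← hfp, hfu]
        exact h.choose_spec.1
      · intro hadj
        rw [hfu, ← h.choose_spec.2 p hadj]
    have hfil : ∀ p, (UpG.filter fun u => (F p).Adj v u).card = HWaux.dup (F p) v := by
      intro p
      rw [HWaux.dup]
      congr 1
      ext u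
      simp only [hUpG, mem_filter, mem_univ, true_and]
      tauto
    rw [Finset.sum_congr rfl (fun p _ => hfil p), hUcard, Fintype.sum_sum_type] at hfibcard
    have hinl : ∀ i ∈ (univ : Finset (Fin (n - 1))),
        HWaux.dup (F (Sum.inl i)) v = 1 := by
      intro i _
      obtain ⟨hle, hreg, hcomp⟩ := hCm i
      exact (HWaux.factorA hm hmo hle hreg v (hcomp v)).1
    rw [Finset.sum_congr rfl hinl, Finset.sum_const, smul_eq_mul, mul_one, card_univ,
      Fintype.card_fin, Fin.sum_univ_one] at hfibcard
    omega
  exact hdvd (HWaux.factorC hm hHle hHreg hdupH (0, 0) (hHcomp (0, 0)))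
end

section
/- Let d ≥ 1 and ν ≥ 1 be integers and let (ℓ_1, …, ℓ_ν) be a Langford sequence of order ν and defect d, i.e., the multiset {ℓ_i : 1 ≤ i ≤ ν} ∪ {ℓ_i + i + (d−1) : 1 ≤ i ≤ ν} equals {1, 2, …, 2ν}. Define triples T_i = {t_{i1}, t_{i2}, t_{i3}} with t_{i1} = i + (d−1), t_{i2} = ℓ_i + ν + (d−1), t_{i3} = −(ℓ_i + i + ν + 2(d−1)). Then t_{i1} + t_{i2} + t_{i3} = 0 for each i, and the sets T_i and −T_i (i = 1,…,ν) partition the set {x ∈ ℤ : d ≤ |x| ≤ d + 3ν − 1}. -/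
/-- The `i`-th triple induced by a Langford sequence `ℓ` of order `ν` and defect `d`,
as a set of integers: `{i + (d-1), ℓ_i + ν + (d-1), -(ℓ_i + i + ν + 2(d-1))}`,
where the index `i : Fin ν` corresponds to `i+1 ∈ {1, …, ν}`. -/
def langfordTriple (d ν : ℕ) (ℓ : Fin ν → ℕ) (i : Fin ν) : Set ℤ :=
  {((i.1 : ℤ) + 1) + ((d : ℤ) - 1),
   (ℓ i : ℤ) + (ν : ℤ) + ((d : ℤ) - 1),
   -((ℓ i : ℤ) + ((i.1 : ℤ) + 1) + (ν : ℤ) + 2 * ((d : ℤ) - 1))}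

/-- The signed family consisting of the triples `T_i` and their negatives `-T_i`. -/
def langfordFamily (d ν : ℕ) (ℓ : Fin ν → ℕ) (p : Fin ν × Bool) : Set ℤ :=
  if p.2 then langfordTriple d ν ℓ p.1 else -(langfordTriple d ν ℓ p.1)

theorem stmt_4 (d ν : ℕ) (hd : 1 ≤ d) (hν : 1 ≤ ν) (ℓ : Fin ν → ℕ)
    (hpos : ∀ i, 1 ≤ ℓ i)
    (hinj : Function.Injective
      (Sum.elim (fun i : Fin ν => ℓ i)
        (fun i : Fin ν => ℓ i + (i.1 + 1) + (d - 1)) : Fin ν ⊕ Fin ν → ℕ))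
    (hrange : Set.range
      (Sum.elim (fun i : Fin ν => ℓ i)
        (fun i : Fin ν => ℓ i + (i.1 + 1) + (d - 1)) : Fin ν ⊕ Fin ν → ℕ) =
      Set.Icc 1 (2 * ν)) :
    (∀ i : Fin ν,
      (((i.1 : ℤ) + 1) + ((d : ℤ) - 1)) + ((ℓ i : ℤ) + (ν : ℤ) + ((d : ℤ) - 1)) +
        (-((ℓ i : ℤ) + ((i.1 : ℤ) + 1) + (ν : ℤ) + 2 * ((d : ℤ) - 1))) = 0) ∧
    Set.univ.PairwiseDisjoint (langfordFamily d ν ℓ) ∧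
    (⋃ p : Fin ν × Bool, langfordFamily d ν ℓ p) =
      {x : ℤ | (d : ℤ) ≤ |x| ∧ |x| ≤ (d : ℤ) + 3 * (ν : ℤ) - 1} := by
  have hmem : ∀ s : Fin ν ⊕ Fin ν,
      (Sum.elim (fun i : Fin ν => ℓ i)
        (fun i : Fin ν => ℓ i + (i.1 + 1) + (d - 1)) : Fin ν ⊕ Fin ν → ℕ) s
        ∈ Set.Icc 1 (2 * ν) := fun s => hrange ▸ Set.mem_range_self s
  have hub1 : ∀ i, ℓ i ≤ 2 * ν := fun i => (hmem (Sum.inl i)).2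
  have hub2 : ∀ i, ℓ i + (i.1 + 1) + (d - 1) ≤ 2 * ν := fun i => (hmem (Sum.inr i)).2
  have hsurj : ∀ n : ℕ, 1 ≤ n → n ≤ 2 * ν →
      ∃ i, ℓ i = n ∨ ℓ i + (i.1 + 1) + (d - 1) = n := by
    intro n h1 h2
    have : n ∈ Set.range (Sum.elim (fun i : Fin ν => ℓ i)
        (fun i : Fin ν => ℓ i + (i.1 + 1) + (d - 1)) : Fin ν ⊕ Fin ν → ℕ) :=
      hrange ▸ Set.mem_Icc.mpr ⟨h1, h2⟩
    obtain ⟨s, hs⟩ := this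
    cases s with
    | inl i => exact ⟨i, Or.inl hs⟩
    | inr i => exact ⟨i, Or.inr hs⟩
  have hEq1 : ∀ i j : Fin ν, ℓ i = ℓ j → i = j := by
    intro i j h
    have := @hinj (Sum.inl i) (Sum.inl j) h
    exact Sum.inl_injective this
  have hEq2 : ∀ i j : Fin ν, ℓ i + (i.1 + 1) + (d - 1) = ℓ j + (j.1 + 1) + (d - 1) → i = j := by
    intro i j h
    have := @hinj (Sum.inr i) (Sum.inr j) h
    exact Sum.inr_injective this
  have hinj3 : ∀ i j : Fin ν, ℓ i ≠ ℓ j + (j.1 + 1) + (d - 1) := by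
    intro i j h
    exact Sum.inl_ne_inr (@hinj (Sum.inl i) (Sum.inr j) h)
  have key : ∀ x : ℤ, (d : ℤ) ≤ x → x ≤ (d : ℤ) + 3 * ν - 1 →
      ∃ p : Fin ν × Bool, x ∈ langfordFamily d ν ℓ p := by
    intro x h1 h2
    by_cases hc : x ≤ (d : ℤ) + ν - 1
    · refine ⟨(⟨(x - d).toNat, by omega⟩, true), ?_⟩
      simp only [langfordFamily, if_true, langfordTriple, Set.mem_insert_iff,
        Set.mem_singleton_iff]
      left
      omega
    · obtain ⟨i, hi | hi⟩ := hsurj (x - ((ν : ℤ) + d - 1)).toNat (by omega) (by omega)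
      · refine ⟨(i, true), ?_⟩
        simp only [langfordFamily, if_true, langfordTriple, Set.mem_insert_iff,
          Set.mem_singleton_iff]
        right; left
        omega
      · refine ⟨(i, false), ?_⟩
        simp only [langfordFamily, Bool.false_eq_true, if_false, Set.mem_neg,
          langfordTriple, Set.mem_insert_iff, Set.mem_singleton_iff]
        right; right
        omega
  refine ⟨fun i => by ring, ?_, ?_⟩
  · intro p _ q _ hpq
    rw [Function.onFun, Set.disjoint_left]
    intro x hxp hxq
    obtain ⟨i, bi⟩ := p
    obtain ⟨j, bj⟩ := q
    have f1 := hpos i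
    have f2 := hpos j
    have f3 := hub1 i
    have f4 := hub1 j
    have f5 := hub2 i
    have f6 := hub2 j
    have f7 := i.isLt
    have f8 := j.isLt
    cases bi <;> cases bj <;>
      simp only [langfordFamily, if_true, Bool.false_eq_true, if_false, Set.mem_neg,
        langfordTriple, Set.mem_insert_iff, Set.mem_singleton_iff] at hxp hxq <;>
      rcases hxp with h1 | h1 | h1 <;> rcases hxq with h2 | h2 | h2 <;>
      first
        | omega
        | exact hpq (congrArg (fun k => (k, true)) (Fin.val_injective (show i.1 = j.1 by omega)))
        | exact hpq (congrArg (fun k => (k, false)) (Fin.val_injective (show i.1 = j.1 by omega)))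
        | exact hpq (congrArg (fun k => (k, true)) (hEq1 i j (by omega)))
        | exact hpq (congrArg (fun k => (k, false)) (hEq1 i j (by omega)))
        | exact hpq (congrArg (fun k => (k, true)) (hEq2 i j (by omega)))
        | exact hpq (congrArg (fun k => (k, false)) (hEq2 i j (by omega)))
        | exact hinj3 i j (by omega)
        | exact hinj3 j i (by omega)
  · ext x
    simp only [Set.mem_iUnion, Set.mem_setOf_eq]
    constructor
    · rintro ⟨⟨i, b⟩, hx⟩
      have f1 := hpos i
      have f3 := hub1 i
      have f5 := hub2 i
      have f7 := i.isLt
      cases b <;>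
        simp only [langfordFamily, if_true, Bool.false_eq_true, if_false, Set.mem_neg,
          langfordTriple, Set.mem_insert_iff, Set.mem_singleton_iff] at hx <;>
        rcases hx with h | h | h <;>
        rcases abs_cases x with ⟨ha1, ha2⟩ | ⟨ha1, ha2⟩ <;> omega
    · rintro ⟨hx1, hx2⟩
      rcases abs_cases x with ⟨ha1, ha2⟩ | ⟨ha1, ha2⟩
      · exact key x (by omega) (by omega)
      · obtain ⟨⟨i, b⟩, hp⟩ := key (-x) (by omega) (by omega)
        refine ⟨(i, !b), ?_⟩
        cases b <;>
          simp only [langfordFamily, if_true, Bool.false_eq_true, if_false, Bool.not_false,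
            Bool.not_true, Set.mem_neg, neg_neg] at hp ⊢ <;>
          simpa using hp
end

section
/- A Langford sequence of order ν and defect d (with ν ≥ 2d−1) can exist only if ν ≡ 0,1 (mod 4) when d is odd, and ν ≡ 0,3 (mod 4) when d is even. -/
/-- `ℓ` is a Langford sequence of order `ν` and defect `d`: the `2ν` values
`ℓ_i` and `ℓ_i + i + (d-1)` (for `i = 1, …, ν`) are distinct and together form
the set `{1, 2, …, 2ν}`. (Index `i : Fin ν` corresponds to `i+1`.) -/
def IsLangfordSequence (d ν : ℕ) (ℓ : Fin ν → ℕ) : Prop :=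
  Function.Injective
      (Sum.elim (fun i : Fin ν => ℓ i)
        (fun i : Fin ν => ℓ i + (i.1 + 1) + (d - 1)) : Fin ν ⊕ Fin ν → ℕ) ∧
  Set.range
      (Sum.elim (fun i : Fin ν => ℓ i)
        (fun i : Fin ν => ℓ i + (i.1 + 1) + (d - 1)) : Fin ν ⊕ Fin ν → ℕ) =
    Set.Icc 1 (2 * ν)

theorem stmt_5 (d ν : ℕ) (hd : 1 ≤ d) (hν : 2 * d - 1 ≤ ν)
    (h : ∃ ℓ : Fin ν → ℕ, IsLangfordSequence d ν ℓ) :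
    (Odd d → ν % 4 = 0 ∨ ν % 4 = 1) ∧ (Even d → ν % 4 = 0 ∨ ν % 4 = 3) := by
  obtain ⟨ℓ, hinj, hrange⟩ := h
  set f : Fin ν ⊕ Fin ν → ℕ :=
    Sum.elim (fun i : Fin ν => ℓ i)
      (fun i : Fin ν => ℓ i + (i.1 + 1) + (d - 1)) with hf
  -- finset image equals Icc
  have himg : Finset.image f Finset.univ = Finset.Icc 1 (2 * ν) := by
    apply Finset.coe_injective
    rw [Finset.coe_image, Finset.coe_univ, Set.image_univ, hrange, Finset.coe_Icc]
  have hsum : ∑ m ∈ Finset.Icc 1 (2 * ν), m = ∑ x : Fin ν ⊕ Fin ν, f x := by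
    rw [← himg, Finset.sum_image (fun x _ y _ hxy => hinj hxy)]
  -- Gauss sum for Icc 1 n
  have hIcc : (∑ m ∈ Finset.Icc 1 (2 * ν), m) * 2 = (2 * ν) * (2 * ν + 1) := by
    have h0 : Finset.range (2 * ν + 1) = insert 0 (Finset.Icc 1 (2 * ν)) := by
      ext x; simp [Finset.mem_range, Finset.mem_Icc]; omega
    have := Finset.sum_range_id_mul_two (2 * ν + 1)
    rw [h0, Finset.sum_insert (by simp)] at this
    rw [Nat.add_sub_cancel] at this
    ring_nf at this ⊢
    linarith [this]
  set S : ℕ := ∑ i : Fin ν, ℓ i with hS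
  have hsplit : ∑ x : Fin ν ⊕ Fin ν, f x
      = S + (S + ((∑ i ∈ Finset.range ν, i) + ν) + ν * (d - 1)) := by
    rw [Fintype.sum_sum_type]
    simp only [hf, Sum.elim_inl, Sum.elim_inr]
    congr 1
    rw [Finset.sum_add_distrib, Finset.sum_add_distrib, Finset.sum_const,
      Finset.card_univ, Fintype.card_fin, smul_eq_mul]
    congr 1
    rw [← hS]
    congr 1
    rw [Fin.sum_univ_eq_sum_range (fun i => i + 1), Finset.sum_add_distrib,
      Finset.sum_const, Finset.card_range, smul_eq_mul, mul_one]
  have hν1 : 1 ≤ ν := by omega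
  have hle : ν ≤ ν * ν := Nat.le_mul_of_pos_left ν hν1
  have hG : (∑ i ∈ Finset.range ν, i) * 2 + ν = ν * ν := by
    have hsub : ν * (ν - 1) = ν * ν - ν := by
      rw [Nat.mul_sub, mul_one]
    rw [Finset.sum_range_id_mul_two ν, hsub, Nat.sub_add_cancel hle]
  -- main equation, with e := d - 1
  obtain ⟨e, rfl⟩ : ∃ e, d = e + 1 := ⟨d - 1, by omega⟩
  have hd1 : e + 1 - 1 = e := rfl
  rw [hd1] at hsplit
  have E : 2 * ν * (2 * ν + 1) = 4 * S + ν * ν + ν + 2 * ν * e := by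
    have h1 : (∑ m ∈ Finset.Icc 1 (2*ν), m) * 2
        = (S + (S + ((∑ i ∈ Finset.range ν, i) + ν) + ν * e)) * 2 := by
      rw [hsum, hsplit]
    rw [hIcc] at h1
    ring_nf at h1 hG ⊢
    linarith [hG, h1]

  constructor
  · rintro ⟨k, hk⟩
    -- e even: e + 1 = 2k+1 → e = 2k... Odd (e+1) means e+1 = 2k+1
    have hek : e = 2 * (k - 0) := by omega
    obtain ⟨j, rfl⟩ : ∃ j, e = 2 * j := ⟨k, by omega⟩
    have E2 : 3 * (ν * ν) + ν = 4 * (S + (ν * j)) := by ring_nf at E ⊢; nlinarith [E]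
    set M := 3 * (ν * ν) + ν with hM
    have hz : M % 4 = 0 := by rw [E2]; simp [Nat.mul_mod_right]
    have hm := Nat.mod_modEq ν 4
    have hc : 3 * (ν % 4) * (ν % 4) + (ν % 4) ≡ 3 * ν * ν + ν [MOD 4] :=
      (((Nat.ModEq.refl 3).mul hm).mul hm).add hm
    have hc' : (3 * (ν % 4) * (ν % 4) + (ν % 4)) % 4 = M % 4 := by
      have := hc; unfold Nat.ModEq at this; rw [this, hM]; ring_nf
    set r := ν % 4 with hr
    have hr4 : r < 4 := Nat.mod_lt _ (by norm_num)
    interval_cases r <;> omega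
  · rintro ⟨k, hk⟩
    obtain ⟨j, rfl⟩ : ∃ j, e = 2 * j + 1 := ⟨k - 1, by omega⟩
    have E2 : 3 * (ν * ν) = 4 * (S + (ν * j)) + ν := by ring_nf at E ⊢; nlinarith [E]
    set M := 3 * (ν * ν) with hM
    have hz : M % 4 = ν % 4 := by rw [E2]; omega
    have hm := Nat.mod_modEq ν 4
    have hc : 3 * (ν % 4) * (ν % 4) ≡ 3 * ν * ν [MOD 4] :=
      ((Nat.ModEq.refl 3).mul hm).mul hm
    have hc' : (3 * (ν % 4) * (ν % 4)) % 4 = M % 4 := by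
      have := hc; unfold Nat.ModEq at this; rw [this, hM]; ring_nf
    set r := ν % 4 with hr
    have hr4 : r < 4 := Nat.mod_lt _ (by norm_num)
    interval_cases r <;> omega
end

section
/- Let n ≥ 3 be odd and suppose S ⊆ ℤ_n \ {0} is closed under negation and can be partitioned as T_1, −T_1, …, T_u, −T_u where each T_i has odd size and the elements of each T_i sum to 0 in ℤ_n. Then for every odd m ≥ max_i |T_i| there exists a matrix construction giving: for each i, a 2|T_i| × m matrix with entries in T_i ∪ (−T_i) whose rows each sum to 0 (in ℤ_n) and whose columns are each a permutation of T_i ∪ (−T_i). -/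
private lemma alt_sum {A : Type*} [AddCommGroup A] (w : ℕ) (x : A) :
    ∑ d ∈ Finset.range (2 * w), (if d % 2 = 0 then x else -x) = 0 := by
  induction w with
  | zero => simp
  | succ w ih =>
    have h1 : (2 * w) % 2 = 0 := by omega
    have h2 : (2 * w + 1) % 2 = 1 := by omega
    rw [Nat.mul_succ, Finset.sum_range_succ, Finset.sum_range_succ, ih, h1, h2]
    simp

theorem stmt_7 (n : ℕ) (hn : 3 ≤ n) (hodd : Odd n) (u : ℕ) (hu : 1 ≤ u)
    (S : Finset (ZMod n)) (hS0 : (0 : ZMod n) ∉ S) (hSneg : ∀ x ∈ S, -x ∈ S)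
    (T : Fin u → Finset (ZMod n))
    (hToddcard : ∀ i, Odd (T i).card)
    (hTsum : ∀ i, ∑ x ∈ T i, x = 0)
    (hdisj : Set.univ.PairwiseDisjoint (fun p : Fin u × Bool =>
        if p.2 then T p.1 else (T p.1).image (fun x => -x)))
    (hunion : ∀ x, x ∈ S ↔ ∃ p : Fin u × Bool,
        x ∈ (if p.2 then T p.1 else (T p.1).image (fun x => -x))) :
    ∀ m : ℕ, Odd m → (∀ i, (T i).card ≤ m) →
      ∀ i : Fin u, ∃ M : Fin (2 * (T i).card) → Fin m → ZMod n,
        (∀ r c, M r c ∈ T i ∪ (T i).image (fun x => -x)) ∧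
        (∀ r, ∑ c, M r c = 0) ∧
        (∀ c, Function.Injective (fun r => M r c) ∧
          ∀ x ∈ T i ∪ (T i).image (fun x => -x), ∃ r, M r c = x) := by
  intro m hm hTm i
  haveI : Fact (1 < n) := ⟨by omega⟩
  have hd : Disjoint (T i) ((T i).image (fun x => -x)) := by
    have := hdisj (Set.mem_univ (i, true)) (Set.mem_univ (i, false)) (by simp)
    simpa [Function.onFun] using this
  set k := (T i).card with hk
  have hkpos : 0 < k := (hToddcard i).pos
  have hkm : k ≤ m := hTm i
  haveI : NeZero k := ⟨hkpos.ne'⟩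
  set e := (T i).equivFin.symm with he
  set E : Fin k → ZMod n := fun j => ((e j : (T i : Finset (ZMod n))) : ZMod n) with hE
  have hEinj : Function.Injective E := fun a b hab => e.injective (Subtype.ext hab)
  have hEmem : ∀ j, E j ∈ T i := fun j => (e j).2
  have hEsurj : ∀ x ∈ T i, ∃ j, E j = x := fun x hx => ⟨e.symm ⟨x, hx⟩, by simp [hE]⟩
  have hEsum : ∑ j, E j = 0 := by
    calc ∑ j, E j = ∑ x : (T i : Finset (ZMod n)), (x : ZMod n) :=
          e.sum_comp (fun x : (T i : Finset (ZMod n)) => (x : ZMod n))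
      _ = ∑ x ∈ T i, x := Finset.sum_coe_sort (T i) (fun x => x)
      _ = 0 := hTsum i
  have hcross : ∀ a b : Fin k, E a ≠ -E b := by
    intro a b hab
    exact (Finset.disjoint_left.1 hd (hEmem a))
      (Finset.mem_image.2 ⟨E b, hEmem b, hab.symm⟩)
  -- sign and projection
  set sg : Fin (2 * k) → ZMod n := fun r => if (r : ℕ) < k then 1 else -1 with hsg
  set P : Fin (2 * k) → Fin k := fun r =>
    if h : (r : ℕ) < k then ⟨r, h⟩ else ⟨(r : ℕ) - k, by have := r.isLt; omega⟩ with hP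
  have hsE : ∀ (r1 r2 : Fin (2 * k)) (a b : Fin k), sg r1 * E a = sg r2 * E b →
      (((r1 : ℕ) < k ↔ (r2 : ℕ) < k) ∧ a = b) := by
    intro r1 r2 a b h
    by_cases h1 : (r1 : ℕ) < k <;> by_cases h2 : (r2 : ℕ) < k <;>
      simp only [hsg, if_pos, if_neg, h1, h2, if_true, if_false, one_mul, neg_one_mul,
        ite_true, ite_false] at h
    · exact ⟨by tauto, hEinj h⟩
    · exact absurd h (hcross a b)
    · exact absurd h.symm (hcross b a)
    · exact ⟨by tauto, hEinj (neg_injective h)⟩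
  have hPinj : ∀ r1 r2 : Fin (2 * k), ((r1 : ℕ) < k ↔ (r2 : ℕ) < k) → P r1 = P r2 →
      r1 = r2 := by
    intro r1 r2 hiff hPeq
    have := congrArg Fin.val hPeq
    by_cases h1 : (r1 : ℕ) < k
    · have h2 := hiff.1 h1
      simp only [hP, dif_pos h1, dif_pos h2] at this
      exact Fin.ext this
    · have h2 : ¬ (r2 : ℕ) < k := fun hh => h1 (hiff.2 hh)
      simp only [hP, dif_neg h1, dif_neg h2] at this
      exact Fin.ext (by omega)
  have hcolinj : ∀ c0 : Fin k,
      Function.Injective (fun r : Fin (2 * k) => sg r * E (P r + c0)) := by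
    intro c0 r1 r2 h
    obtain ⟨hiff, heq⟩ := hsE r1 r2 _ _ h
    exact hPinj r1 r2 hiff (add_right_cancel heq)
  have hcolsurj : ∀ c0 : Fin k, ∀ x ∈ T i ∪ (T i).image (fun x => -x),
      ∃ r : Fin (2 * k), sg r * E (P r + c0) = x := by
    intro c0 x hx
    rcases Finset.mem_union.1 hx with hx | hx
    · obtain ⟨j, hj⟩ := hEsurj x hx
      set v := ((j - c0 : Fin k) : ℕ) with hvdef
      have hvk : v < k := (j - c0).isLt
      have hv2 : v < 2 * k := by omega
      refine ⟨⟨v, hv2⟩, ?_⟩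
      have hlt : ((⟨v, hv2⟩ : Fin (2 * k)) : ℕ) < k := hvk
      have h1 : sg ⟨v, hv2⟩ = 1 := by simp only [hsg]; rw [if_pos hlt]
      have h2 : P ⟨v, hv2⟩ = j - c0 := by
        simp only [hP]; rw [dif_pos hlt]
      rw [h1, h2, one_mul, sub_add_cancel, hj]
    · obtain ⟨y, hy, hyx⟩ := Finset.mem_image.1 hx
      obtain ⟨j, hj⟩ := hEsurj y hy
      set v := ((j - c0 : Fin k) : ℕ) with hvdef
      have hvk : v < k := (j - c0).isLt
      have hv2 : k + v < 2 * k := by omega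
      refine ⟨⟨k + v, hv2⟩, ?_⟩
      have hnlt : ¬ ((⟨k + v, hv2⟩ : Fin (2 * k)) : ℕ) < k := by
        show ¬ (k + v < k); omega
      have h1 : sg ⟨k + v, hv2⟩ = -1 := by simp only [hsg]; rw [if_neg hnlt]
      have h2 : P ⟨k + v, hv2⟩ = j - c0 := by
        simp only [hP]; rw [dif_neg hnlt]
        exact Fin.ext (show k + v - k = v by omega)
      rw [h1, h2, neg_one_mul, sub_add_cancel, hj, hyx]
  have hnegmem : ∀ x ∈ T i ∪ (T i).image (fun x => -x),
      -x ∈ T i ∪ (T i).image (fun x => -x) := by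
    intro x hx
    rcases Finset.mem_union.1 hx with hx | hx
    · exact Finset.mem_union_right _ (Finset.mem_image.2 ⟨x, hx, rfl⟩)
    · obtain ⟨y, hy, rfl⟩ := Finset.mem_image.1 hx
      exact Finset.mem_union_left _ (by simpa using hy)
  set ε : ℕ → ZMod n := fun cv => if (cv - k) % 2 = 0 then 1 else -1 with hε
  set Mf : Fin (2 * k) → Fin m → ZMod n := fun r c =>
    if hc : (c : ℕ) < k then sg r * E (P r + ⟨(c : ℕ), hc⟩)
    else ε (c : ℕ) * (sg r * E (P r)) with hMf
  have hmemE : ∀ (s' : ZMod n) (j : Fin k), (s' = 1 ∨ s' = -1) →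
      s' * E j ∈ T i ∪ (T i).image (fun x => -x) := by
    rintro s' j (rfl | rfl)
    · rw [one_mul]; exact Finset.mem_union_left _ (hEmem j)
    · rw [neg_one_mul]
      exact Finset.mem_union_right _ (Finset.mem_image.2 ⟨E j, hEmem j, rfl⟩)
  have hsgpm : ∀ r, sg r = 1 ∨ sg r = -1 := by
    intro r; by_cases h : (r : ℕ) < k <;> simp [hsg, h]
  have hεpm : ∀ cv, ε cv = 1 ∨ ε cv = -1 := by
    intro cv; by_cases h : (cv - k) % 2 = 0 <;> simp [hε, h]
  refine ⟨Mf, ?_, ?_, ?_⟩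
  · intro r c
    by_cases hc : (c : ℕ) < k
    · rw [show Mf r c = sg r * E (P r + ⟨(c : ℕ), hc⟩) from dif_pos hc]
      exact hmemE _ _ (hsgpm r)
    · rw [show Mf r c = ε (c : ℕ) * (sg r * E (P r)) from dif_neg hc, ← mul_assoc]
      refine hmemE _ _ ?_
      rcases hεpm (c : ℕ) with h1 | h1 <;> rcases hsgpm r with h2 | h2 <;>
        rw [h1, h2] <;> simp
  · intro r
    set F : ℕ → ZMod n := fun cv =>
      if hc : cv < k then sg r * E (P r + ⟨cv, hc⟩)
      else ε cv * (sg r * E (P r)) with hF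
    have hFM : ∀ c : Fin m, Mf r c = F (c : ℕ) := fun c => rfl
    simp only [hFM]
    rw [Fin.sum_univ_eq_sum_range F m, Finset.range_eq_Ico,
      ← Finset.sum_Ico_consecutive F (Nat.zero_le k) hkm]
    have h1 : ∑ cv ∈ Finset.Ico 0 k, F cv = 0 := by
      rw [← Finset.range_eq_Ico, ← Fin.sum_univ_eq_sum_range F k]
      have : ∀ c : Fin k, F (c : ℕ) = sg r * E (P r + c) := by
        intro c
        rw [hF]
        simp only [dif_pos c.isLt, Fin.eta]
      simp only [this]
      have hsum2 : ∑ j : Fin k, E (P r + j) = ∑ j, E j :=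
        Fintype.sum_equiv (Equiv.addLeft (P r)) (fun j => E (P r + j)) E (fun j => rfl)
      rw [← Finset.mul_sum, hsum2, hEsum, mul_zero]
    have h2 : ∑ cv ∈ Finset.Ico k m, F cv = 0 := by
      rw [Finset.sum_Ico_eq_sum_range]
      have hterm : ∀ d, F (k + d) = (if d % 2 = 0 then (sg r * E (P r)) else -(sg r * E (P r))) := by
        intro d
        rw [hF]
        simp only [dif_neg (by omega : ¬ k + d < k)]
        rw [hε]
        simp only [Nat.add_sub_cancel_left]
        split_ifs <;> simp
      simp only [hterm]
      obtain ⟨a, ha⟩ := hm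
      obtain ⟨b, hb⟩ := hToddcard i
      rw [show m - k = 2 * (a - b) by omega]
      exact alt_sum _ _
    rw [h1, h2, add_zero]
  · intro c
    by_cases hc : (c : ℕ) < k
    · have hM : ∀ r, Mf r c = sg r * E (P r + ⟨(c : ℕ), hc⟩) := fun r => dif_pos hc
      constructor
      · intro r1 r2 h
        simp only [hM] at h
        exact hcolinj _ h
      · intro x hx
        obtain ⟨r, hr⟩ := hcolsurj ⟨(c : ℕ), hc⟩ x hx
        exact ⟨r, by rw [hM r]; exact hr⟩
    · have hM : ∀ r, Mf r c = ε (c : ℕ) * (sg r * E (P r)) := fun r => dif_neg hc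
      have hsq : ε (c : ℕ) * ε (c : ℕ) = 1 := by
        rcases hεpm (c : ℕ) with h | h <;> rw [h] <;> ring
      have hG : ∀ r : Fin (2 * k), sg r * E (P r) = sg r * E (P r + 0) := by
        intro r; rw [add_zero]
      constructor
      · intro r1 r2 h
        simp only [hM] at h
        have h' := congrArg (fun z => ε (c : ℕ) * z) h
        simp only [← mul_assoc, hsq, one_mul] at h'
        rw [hG r1, hG r2] at h'
        exact hcolinj 0 h'
      · intro x hx
        rcases hεpm (c : ℕ) with h | h
        · obtain ⟨r, hr⟩ := hcolsurj 0 x hx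
          exact ⟨r, by rw [hM r, h, one_mul, hG r]; exact hr⟩
        · obtain ⟨r, hr⟩ := hcolsurj 0 (-x) (hnegmem x hx)
          refine ⟨r, ?_⟩
          rw [hM r, h, neg_one_mul, hG r, hr, neg_neg]
end

section
/- Suppose ν ≡ 0 or 1 (mod 4). Interpreting a Skolem sequence of order ν as giving triples T_i = {i, ℓ_i + ν, −(ℓ_i + i + ν)} for i = 1,…,ν: each triple sums to 0 and the sets T_1, −T_1, …, T_ν, −T_ν partition {x ∈ ℤ : 1 ≤ |x| ≤ 3ν}. -/
/-- The `i`-th triple induced by a Skolem sequence `ℓ` of order `ν`, as a set of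
integers: `{i, ℓ_i + ν, -(ℓ_i + i + ν)}`, where `i : Fin ν` corresponds to
`i+1 ∈ {1, …, ν}`. -/
def skolemTriple (ν : ℕ) (ℓ : Fin ν → ℕ) (i : Fin ν) : Set ℤ :=
  {(i.1 : ℤ) + 1, (ℓ i : ℤ) + (ν : ℤ), -((ℓ i : ℤ) + ((i.1 : ℤ) + 1) + (ν : ℤ))}

/-- The signed family consisting of the triples `T_i` and their negatives `-T_i`. -/
def skolemFamily (ν : ℕ) (ℓ : Fin ν → ℕ) (p : Fin ν × Bool) : Set ℤ :=
  if p.2 then skolemTriple ν ℓ p.1 else -(skolemTriple ν ℓ p.1)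

theorem stmt_14 (ν : ℕ) (hν : ν % 4 = 0 ∨ ν % 4 = 1) (ℓ : Fin ν → ℕ)
    (hpos : ∀ i, 1 ≤ ℓ i)
    (hinj : Function.Injective
      (Sum.elim (fun i : Fin ν => ℓ i)
        (fun i : Fin ν => ℓ i + (i.1 + 1)) : Fin ν ⊕ Fin ν → ℕ))
    (hrange : Set.range
      (Sum.elim (fun i : Fin ν => ℓ i)
        (fun i : Fin ν => ℓ i + (i.1 + 1)) : Fin ν ⊕ Fin ν → ℕ) =
      Set.Icc 1 (2 * ν)) :
    (∀ i : Fin ν,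
      ((i.1 : ℤ) + 1) + ((ℓ i : ℤ) + (ν : ℤ)) +
        (-((ℓ i : ℤ) + ((i.1 : ℤ) + 1) + (ν : ℤ))) = 0) ∧
    Set.univ.PairwiseDisjoint (skolemFamily ν ℓ) ∧
    (⋃ p : Fin ν × Bool, skolemFamily ν ℓ p) =
      {x : ℤ | 1 ≤ |x| ∧ |x| ≤ 3 * (ν : ℤ)} := by
  -- basic bounds
  have hub : ∀ i : Fin ν, ℓ i + (i.1 + 1) ≤ 2 * ν := by
    intro i
    have h : ℓ i + (i.1 + 1) ∈ Set.Icc 1 (2 * ν) := by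
      rw [← hrange]; exact ⟨Sum.inr i, rfl⟩
    exact h.2
  have hll : ∀ i j : Fin ν, ℓ i = ℓ j → i = j := by
    intro i j h
    have := hinj (a₁ := Sum.inl i) (a₂ := Sum.inl j) (by simpa using h)
    simpa using this
  have hrr : ∀ i j : Fin ν, ℓ i + (i.1 + 1) = ℓ j + (j.1 + 1) → i = j := by
    intro i j h
    have := hinj (a₁ := Sum.inr i) (a₂ := Sum.inr j) (by simpa using h)
    simpa using this
  have hlr : ∀ i j : Fin ν, ℓ i ≠ ℓ j + (j.1 + 1) := by
    intro i j h
    have := hinj (a₁ := Sum.inl i) (a₂ := Sum.inr j) (by simpa using h)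
    simp at this
  have memT : ∀ (i : Fin ν) (x : ℤ), x ∈ skolemTriple ν ℓ i ↔
      x = (i.1 : ℤ) + 1 ∨ x = (ℓ i : ℤ) + ν ∨
        x = -((ℓ i : ℤ) + ((i.1 : ℤ) + 1) + ν) := by
    intro i x
    simp [skolemTriple]
  -- same-sign triples are disjoint
  have keyT : ∀ (i j : Fin ν) (x : ℤ),
      x ∈ skolemTriple ν ℓ i → x ∈ skolemTriple ν ℓ j → i = j := by
    intro i j x hi hj
    rw [memT] at hi hj
    have b1 := hub i; have b2 := hub j
    have b3 := hpos i; have b4 := hpos j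
    have b5 := i.isLt; have b6 := j.isLt
    rcases hi with h | h | h <;> rcases hj with h' | h' | h' <;>
      first
        | exact Fin.ext (by omega)
        | exact hll i j (by omega)
        | exact hrr i j (by omega)
        | (exfalso; omega)
  have keyN : ∀ (i j : Fin ν) (x : ℤ),
      x ∈ skolemTriple ν ℓ i → -x ∈ skolemTriple ν ℓ j → False := by
    intro i j x hi hj
    rw [memT] at hi hj
    have b1 := hub i; have b2 := hub j
    have b3 := hpos i; have b4 := hpos j
    have b5 := i.isLt; have b6 := j.isLt
    rcases hi with h | h | h <;> rcases hj with h' | h' | h' <;>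
      first
        | exact hlr i j (by omega)
        | exact hlr j i (by omega)
        | omega
  have key : ∀ (p q : Fin ν × Bool) (x : ℤ),
      x ∈ skolemFamily ν ℓ p → x ∈ skolemFamily ν ℓ q → p = q := by
    rintro ⟨i, bi⟩ ⟨j, bj⟩ x hp hq
    cases bi <;> cases bj <;>
      simp only [skolemFamily, if_true, if_false, Bool.false_eq_true,
        Set.mem_neg] at hp hq
    · exact Prod.ext (keyT i j (-x) hp hq) rfl
    · exact (keyN j i x hq hp).elim
    · exact (keyN i j x hp hq).elim
    · exact Prod.ext (keyT i j x hp hq) rfl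
  refine ⟨fun i => by ring, ?_, ?_⟩
  · intro p _ q _ hpq
    simp only [Function.onFun]
    rw [Set.disjoint_left]
    intro x hxp hxq
    exact hpq (key p q x hxp hxq)
  · -- covering
    have cover : ∀ y : ℤ, 1 ≤ y → y ≤ 3 * (ν : ℤ) →
        ∃ p : Fin ν × Bool, y ∈ skolemFamily ν ℓ p := by
      intro y h1 h2
      by_cases hy : y ≤ (ν : ℤ)
      · have hν0 : 0 < ν := by omega
        refine ⟨(⟨y.toNat - 1, by omega⟩, true), ?_⟩
        simp only [skolemFamily, if_true, memT]
        left
        push_cast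
        omega
      · have hmem : (y - ν).toNat ∈ Set.Icc 1 (2 * ν) := by
          simp only [Set.mem_Icc]; omega
        rw [← hrange] at hmem
        obtain ⟨s, hs⟩ := hmem
        cases s with
        | inl i =>
          refine ⟨(i, true), ?_⟩
          simp only [skolemFamily, if_true, memT]
          right; left
          simp only [Sum.elim_inl] at hs
          omega
        | inr i =>
          refine ⟨(i, false), ?_⟩
          simp only [skolemFamily, Bool.false_eq_true, if_false, Set.mem_neg, memT]
          right; right
          simp only [Sum.elim_inr] at hs
          push_cast
          omega
    ext x
    simp only [Set.mem_iUnion, Set.mem_setOf_eq]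
    constructor
    · rintro ⟨⟨i, b⟩, hx⟩
      have b1 := hub i; have b3 := hpos i; have b5 := i.isLt
      cases b <;>
        simp only [skolemFamily, if_true, Bool.false_eq_true, if_false,
          Set.mem_neg, memT] at hx <;>
        rcases hx with h | h | h <;>
        rcases abs_cases x with ⟨h1, h2⟩ | ⟨h1, h2⟩ <;>
        constructor <;> omega
    · rintro ⟨h1, h2⟩
      rcases abs_cases x with ⟨ha, hb⟩ | ⟨ha, hb⟩
      · exact cover x (by omega) (by omega)
      · obtain ⟨⟨i, b⟩, hp⟩ := cover (-x) (by omega) (by omega)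
        refine ⟨(i, !b), ?_⟩
        cases b <;>
          simp only [skolemFamily, Bool.not_true, Bool.not_false, if_true,
            Bool.false_eq_true, if_false, Set.mem_neg, neg_neg] at hp ⊢ <;>
          simpa using hp
end
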